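/- Let n ≥ 2, let A be an invertible n×n real matrix, b, c ∈ ℝⁿ with c₁ ≠ 0, let M̃ be the lower-right (n−1)×(n−1) block of M = (I − (1/c₁) c e₁ᵀ) A, and assume det(M̃) ≠ 0 and ρᵀ b ≠ 0, where ρᵀ = e₁ᵀ adj(A). Define α_L = −(ρᵀ b)/det(A) and α_S = (ρᵀ b) c₁ / det(M̃). Then sgn(α_L α_S) = (−1)^{N_L + N_S} sgn(c₁), where N_L is the number of positive real eigenvalues of A counted with algebraic multiplicity (the number of real roots λ > 0 of the characteristic polynomial of A, counted with multiplicity) and N_S is the corresponding number for M̃. -/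
import Mathlib


open Matrix
section FeiginAux
open Polynomial


lemma my_sign_mul (a b : ℝ) : Real.sign (a * b) = Real.sign a * Real.sign b := by
  obtain ha | rfl | ha := lt_trichotomy a 0 <;> obtain hb | rfl | hb := lt_trichotomy b 0 <;>
    simp [Real.sign_of_neg, Real.sign_of_pos, Real.sign_zero,
      mul_pos, mul_pos_of_neg_of_neg, mul_neg_of_neg_of_pos, mul_neg_of_pos_of_neg, *]

lemma no_roots_pos (q : ℝ[X]) (hm : q.Monic) (hr : q.roots = 0) (x : ℝ) : 0 < q.eval x := by
  have hq0 : q ≠ 0 := hm.ne_zero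
  have hne : ∀ y : ℝ, q.eval y ≠ 0 := by
    intro y hy
    have : y ∈ q.roots := by rw [Polynomial.mem_roots hq0]; exact hy
    simp [hr] at this
  by_contra h
  push_neg at h
  have hx : q.eval x < 0 := lt_of_le_of_ne h (hne x)
  by_cases hdeg : 0 < q.degree
  · have ht := Polynomial.tendsto_atTop_of_leadingCoeff_nonneg q hdeg
      (by rw [hm.leadingCoeff]; norm_num)
    obtain ⟨y, hy0, hxy⟩ := ((ht.eventually_ge_atTop 0).and (Filter.eventually_ge_atTop x)).exists
    have hcont : ContinuousOn (fun t : ℝ => q.eval t) (Set.Icc x y) :=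
      (Polynomial.continuous q).continuousOn
    have : (0 : ℝ) ∈ Set.Icc (q.eval x) (q.eval y) := ⟨hx.le, hy0⟩
    obtain ⟨z, _, hz⟩ := intermediate_value_Icc hxy hcont this
    exact hne z hz
  · have hnd : q.natDegree = 0 := Polynomial.natDegree_eq_zero_iff_degree_le_zero.mpr (not_lt.1 hdeg)
    have : q = Polynomial.C (q.coeff 0) := Polynomial.eq_C_of_degree_le_zero (not_lt.1 hdeg)
    have h1 : q.coeff 0 = 1 := by
      have := hm.leadingCoeff
      rwa [Polynomial.leadingCoeff, hnd] at this
    rw [this, h1] at hx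
    simp only [Polynomial.eval_C] at hx
    linarith

lemma sign_neg_prod (s : Multiset ℝ) (hs : (0 : ℝ) ∉ s) :
    Real.sign (s.map (fun a => -a)).prod
      = (-1 : ℝ) ^ (Multiset.card (s.filter (fun r => 0 < r))) := by
  induction s using Multiset.induction_on with
  | empty => simp
  | cons a t ih =>
    have ha : a ≠ 0 := fun h => hs (h ▸ Multiset.mem_cons_self a t)
    have ht : (0 : ℝ) ∉ t := fun h => hs (Multiset.mem_cons_of_mem h)
    rw [Multiset.map_cons, Multiset.prod_cons, my_sign_mul, ih ht, Multiset.filter_cons]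
    by_cases hpos : 0 < a
    · simp [hpos, Real.sign_of_neg (neg_neg_iff_pos.mpr hpos), pow_succ, mul_comm]
    · have : a < 0 := lt_of_le_of_ne (not_lt.1 hpos) ha
      simp [hpos, Real.sign_of_pos (neg_pos.mpr this)]

lemma sign_det_eq {m : ℕ} (B : Matrix (Fin m) (Fin m) ℝ) (hB : B.det ≠ 0) :
    Real.sign B.det
      = (-1 : ℝ) ^ (m + Multiset.card (B.charpoly.roots.filter (fun r => 0 < r))) := by
  have hdet : B.det = (-1 : ℝ) ^ m * B.charpoly.coeff 0 := by
    rw [Matrix.det_eq_sign_charpoly_coeff]; simp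
  have heval : B.charpoly.coeff 0 = B.charpoly.eval 0 := by
    rw [Polynomial.coeff_zero_eq_eval_zero]
  obtain ⟨q, hpq, _, hq0⟩ := B.charpoly.exists_prod_multiset_X_sub_C_mul
  have hqm : q.Monic :=
    (Polynomial.monic_multiset_prod_of_monic _ _ (fun a _ => Polynomial.monic_X_sub_C a)
      ).of_mul_monic_left (hpq ▸ B.charpoly_monic)
  have hev : B.charpoly.eval 0
      = (B.charpoly.roots.map (fun a => -a)).prod * q.eval 0 := by
    conv_lhs => rw [← hpq]
    rw [Polynomial.eval_mul, Polynomial.eval_multiset_prod, Multiset.map_map]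
    simp [Function.comp]
  have hqpos := no_roots_pos q hqm hq0 0
  have h0 : (0 : ℝ) ∉ B.charpoly.roots := by
    intro h
    have := Polynomial.isRoot_of_mem_roots h
    rw [Polynomial.IsRoot, ← heval] at this
    rw [hdet, this, mul_zero] at hB
    exact hB rfl
  rw [hdet, heval, hev, my_sign_mul, my_sign_mul, Real.sign_of_pos hqpos,
    sign_neg_prod _ h0, mul_one, pow_add]
  congr 1
  rcases Nat.even_or_odd m with he | ho
  · rw [Even.neg_one_pow he, Real.sign_one]
  · rw [Odd.neg_one_pow ho, Real.sign_of_neg (by norm_num)]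
theorem feigin_sign_formula' (n : ℕ) (A : Matrix (Fin (n + 2)) (Fin (n + 2)) ℝ)
    (B : Matrix (Fin (n + 1)) (Fin (n + 1)) ℝ)
    (b c : Fin (n + 2) → ℝ) (hA : IsUnit A.det) (hc : c 0 ≠ 0)
    (hM : B.det ≠ 0) (hb : (A.adjugate.mulVec b) 0 ≠ 0) :
    Real.sign ((-(A.adjugate.mulVec b) 0 / A.det)
        * ((A.adjugate.mulVec b) 0 * c 0 / B.det))
      = (-1 : ℝ) ^ (Multiset.card (A.charpoly.roots.filter (fun r => 0 < r))
            + Multiset.card (B.charpoly.roots.filter (fun r => 0 < r)))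
          * Real.sign (c 0) := by
  have hdA : A.det ≠ 0 := hA.ne_zero
  set u := (A.adjugate.mulVec b) 0 with hu
  set NL := Multiset.card (A.charpoly.roots.filter (fun r => 0 < r))
  set NS := Multiset.card (B.charpoly.roots.filter (fun r => 0 < r))
  have h1 : Real.sign ((-u / A.det) * (u * c 0 / B.det))
      = (Real.sign u * Real.sign u)
        * (-(Real.sign A.det * Real.sign B.det)) * Real.sign (c 0) := by
    rw [div_eq_mul_inv, div_eq_mul_inv, my_sign_mul, my_sign_mul, my_sign_mul,
      my_sign_mul, Real.sign_inv, Real.sign_inv, Real.sign_neg]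
    ring
  have hu2 : Real.sign u * Real.sign u = 1 := by
    rcases Real.sign_apply_eq_of_ne_zero u hb with h | h <;> rw [h] <;> norm_num
  rw [h1, hu2, one_mul, sign_det_eq A hdA, sign_det_eq B hM]
  have h2 : (-1 : ℝ) ^ (n + 2 + NL) * (-1 : ℝ) ^ (n + 1 + NS) = -(-1 : ℝ) ^ (NL + NS) := by
    rw [← pow_add, show (n + 2 + NL) + (n + 1 + NS) = 2 * (n + 1) + 1 + (NL + NS) by ring,
      pow_add, pow_add, pow_mul, neg_one_sq, one_pow]
    ring
  rw [h2]
  ring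

end FeiginAux

/-- The matrix `M = (I − (1/c₁) c e₁ᵀ) A`. -/
noncomputable def Mmat {n : ℕ} (A : Matrix (Fin (n + 2)) (Fin (n + 2)) ℝ)
    (c : Fin (n + 2) → ℝ) : Matrix (Fin (n + 2)) (Fin (n + 2)) ℝ :=
  ((1 : Matrix (Fin (n + 2)) (Fin (n + 2)) ℝ)
      - (c 0)⁻¹ • Matrix.vecMulVec c (Pi.single 0 1)) * A

/-- `M̃`, the lower-right `(n−1)×(n−1)` block of `M`. -/
noncomputable def Mtilde {n : ℕ} (A : Matrix (Fin (n + 2)) (Fin (n + 2)) ℝ)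
    (c : Fin (n + 2) → ℝ) : Matrix (Fin (n + 1)) (Fin (n + 1)) ℝ :=
  (Mmat A c).submatrix Fin.succ Fin.succ

/-- Theorem 1 (Feigin analysis):
`sgn(α_L α_S) = (−1)^{N_L + N_S} sgn(c₁)`, where
`α_L = −(ρᵀ b)/det(A)`, `α_S = (ρᵀ b) c₁ / det(M̃)`, `ρᵀ = e₁ᵀ adj(A)`,
and `N_L`, `N_S` count the positive real eigenvalues of `A` and `M̃`
with algebraic multiplicity. -/
theorem feigin_sign_formula (n : ℕ) (A : Matrix (Fin (n + 2)) (Fin (n + 2)) ℝ)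
    (b c : Fin (n + 2) → ℝ) (hA : IsUnit A.det) (hc : c 0 ≠ 0)
    (hM : (Mtilde A c).det ≠ 0) (hb : (A.adjugate.mulVec b) 0 ≠ 0) :
    Real.sign ((-(A.adjugate.mulVec b) 0 / A.det)
        * ((A.adjugate.mulVec b) 0 * c 0 / (Mtilde A c).det))
      = (-1 : ℝ) ^ (Multiset.card (A.charpoly.roots.filter (fun r => 0 < r))
            + Multiset.card ((Mtilde A c).charpoly.roots.filter (fun r => 0 < r)))
          * Real.sign (c 0) := by
  exact feigin_sign_formula' n A (Mtilde A c) b c hA hc hM hb
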